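/- arXiv:2303.11864 — 6 statements merged into one kernel-verified Lean document; each statement's English description precedes it below -/
import Mathlib

section
/- For every nonnegative integer n, the function g(u) := e^{|u|} ∫_{-∞}^{∞} |v|^n e^{-|v| - |v+u|} dv satisfies g(u) = O(|u|^{n+1}) as |u| → ∞. More precisely, for u ≥ 0 one has g(u) = (n!/2^{n+1}) ∑_{j=0}^{n} (2^j/j!) u^j + u^{n+1}/(n+1) + n!/2^{n+1}, and g is an even function of u. -/
/-!
For `u ≥ 0` split the line at `-u` and `0`. On `(0, ∞)` the integrand is `e^{-u} v^n e^{-2v}`, on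
`(-u, 0]` the exponential factor is the constant `e^{-u}`, and on `(-∞, -u]` the substitution
`v = -(x + u)` turns it into `e^{-u} (x + u)^n e^{-2x}`. The Gamma integrals
`∫₀^∞ x^k e^{-2x} dx = k!/2^{k+1}` and the binomial theorem then give the closed form, which is a
polynomial of degree `n + 1` in `u`. Evenness comes from the substitution `v ↦ -v`.
-/

open MeasureTheory Filter Asymptotics Topology
open Set Real
open scoped Nat

lemma integral_pow_mul_exp_neg_mul_Ioi {b : ℝ} (hb : 0 < b) (m : ℕ) :
    ∫ x in Ioi 0, x ^ m * exp (-(b * x)) = m ! / b ^ (m + 1) := by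
  have h := integral_rpow_mul_exp_neg_mul_Ioi (a := (m : ℝ) + 1) (by positivity) hb
  rw [add_sub_cancel_right] at h
  simp_rw [rpow_natCast] at h
  rw [h, Gamma_nat_eq_factorial, ← Nat.cast_succ, rpow_natCast, one_div_pow,
    one_div_mul_eq_div]

lemma integrableOn_pow_mul_exp_neg_mul_Ioi {b : ℝ} (hb : 0 < b) (m : ℕ) :
    IntegrableOn (fun x : ℝ => x ^ m * exp (-(b * x))) (Ioi 0) := by
  simpa only [rpow_one, rpow_natCast, neg_mul] using
    integrableOn_rpow_mul_exp_neg_mul_rpow (s := m) (by linarith [m.cast_nonneg (α := ℝ)])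
      one_pos hb

lemma integrable_comp_abs_of_integrableOn_Ioi {E : Type*} [NormedAddCommGroup E] {f : ℝ → E}
    (hf : IntegrableOn f (Ioi 0)) : Integrable fun x => f |x| := by
  have hIoi : IntegrableOn (fun x => f |x|) (Ioi 0) :=
    hf.congr_fun (fun x hx => by rw [abs_of_pos hx]) measurableSet_Ioi
  have hIic : IntegrableOn (fun x => f |x|) (Iic 0) := by
    have hneg : MeasurableEmbedding (Neg.neg : ℝ → ℝ) := (Homeomorph.neg ℝ).measurableEmbedding
    rw [← Measure.map_neg_eq_self (volume : Measure ℝ), hneg.integrableOn_map_iff]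
    simpa [Function.comp_def] using
      (integrableOn_Ici_iff_integrableOn_Ioi (μ := volume)).mpr hIoi
  rw [← integrableOn_univ, ← Iic_union_Ioi (a := (0 : ℝ))]
  exact hIic.union hIoi

lemma setIntegral_Ioi_comp_sub {E : Type*} [NormedAddCommGroup E] [NormedSpace ℝ E]
    (c u : ℝ) (f : ℝ → E) :
    ∫ x in Ioi (c + u), f (x - u) = ∫ x in Ioi c, f x := by
  simpa only [preimage_sub_const_Ioi] using
    (measurePreserving_sub_right volume u).setIntegral_preimage_emb
      (measurableEmbedding_subRight u) f (Ioi c)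

lemma choose_mul_factorial_div_pow {b : ℝ} (hb : b ≠ 0) {n k : ℕ} (hk : k ≤ n) (u : ℝ) :
    u ^ k * n.choose k * ((n - k)! / b ^ (n - k + 1))
      = n ! / b ^ (n + 1) * (b ^ k / k ! * u ^ k) := by
  have hfac : (n.choose k : ℝ) * k ! * (n - k)! = n ! := by
    exact_mod_cast Nat.choose_mul_factorial_mul_factorial hk
  have hpow : b ^ (n - k + 1) * b ^ k = b ^ (n + 1) := by
    rw [← pow_add]; congr 1; omega
  rw [← hfac, ← hpow]
  field_simp

lemma integral_add_pow_mul_exp_neg_mul_Ioi {b : ℝ} (hb : 0 < b) (n : ℕ) (u : ℝ) :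
    ∫ x in Ioi 0, (x + u) ^ n * exp (-(b * x))
      = n ! / b ^ (n + 1) * ∑ j ∈ Finset.range (n + 1), b ^ j / j ! * u ^ j := by
  simp_rw [add_comm _ u, add_pow, Finset.sum_mul, Finset.mul_sum]
  rw [integral_finsetSum _ fun k _ =>
    ((integrableOn_pow_mul_exp_neg_mul_Ioi hb (n - k)).const_mul (u ^ k * n.choose k)).congr
      (ae_of_all _ fun x => by ring)]
  refine Finset.sum_congr rfl fun k hk => ?_
  rw [← choose_mul_factorial_div_pow hb.ne' (Nat.lt_succ_iff.mp (Finset.mem_range.mp hk)),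
    ← integral_pow_mul_exp_neg_mul_Ioi hb, ← integral_const_mul]
  congr 1 with x
  ring

noncomputable def expConvIntegrand (n : ℕ) (u v : ℝ) : ℝ := |v| ^ n * exp (-|v| - |v + u|)

lemma integrable_expConvIntegrand (n : ℕ) (u : ℝ) : Integrable (expConvIntegrand n u) := by
  have hdom : Integrable fun v : ℝ => |v| ^ n * exp (-|v|) :=
    integrable_comp_abs_of_integrableOn_Ioi (f := fun x => x ^ n * exp (-x)) <| by
      simpa using integrableOn_rpow_mul_exp_neg_mul_rpow (s := n) (p := 1) (b := 1)
        (by linarith [n.cast_nonneg (α := ℝ)]) one_pos one_pos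
  refine hdom.mono' (by unfold expConvIntegrand; fun_prop) (ae_of_all _ fun v => ?_)
  rw [expConvIntegrand, norm_eq_abs, abs_mul, abs_pow, abs_abs, abs_exp]
  gcongr
  linarith [abs_nonneg (v + u)]

lemma integral_expConvIntegrand_neg (n : ℕ) (u : ℝ) :
    ∫ v, expConvIntegrand n (-u) v = ∫ v, expConvIntegrand n u v := by
  rw [← integral_neg_eq_self]
  congr 1 with v
  rw [expConvIntegrand, expConvIntegrand, abs_neg, ← neg_add, abs_neg]

lemma setIntegral_Ioi_expConvIntegrand (n : ℕ) {u : ℝ} (hu : 0 ≤ u) :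
    ∫ v in Ioi 0, expConvIntegrand n u v = exp (-u) * (n ! / 2 ^ (n + 1)) := by
  rw [← integral_pow_mul_exp_neg_mul_Ioi two_pos, ← integral_const_mul]
  refine setIntegral_congr_fun measurableSet_Ioi fun v (hv : 0 < v) => ?_
  rw [expConvIntegrand, abs_of_pos hv, abs_of_pos (by linarith), mul_left_comm, ← exp_add]
  ring_nf

lemma setIntegral_Ioc_expConvIntegrand (n : ℕ) {u : ℝ} (hu : 0 ≤ u) :
    ∫ v in Ioc (-u) 0, expConvIntegrand n u v = exp (-u) * (u ^ (n + 1) / (n + 1)) := by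
  have hpow : ∫ v in Ioc (-u) 0, (-v) ^ n = u ^ (n + 1) / (n + 1) := by
    rw [← intervalIntegral.integral_of_le (neg_nonpos.2 hu),
      intervalIntegral.integral_comp_neg (fun v => v ^ n), integral_pow]
    simp
  rw [← hpow, ← integral_const_mul]
  refine setIntegral_congr_fun measurableSet_Ioc fun v ⟨hlo, hhi⟩ => ?_
  rw [expConvIntegrand, abs_of_nonpos hhi, abs_of_nonneg (by linarith), mul_comm]
  ring_nf

lemma setIntegral_Iic_expConvIntegrand (n : ℕ) {u : ℝ} (hu : 0 ≤ u) :
    ∫ v in Iic (-u), expConvIntegrand n u v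
      = exp (-u) * (n ! / 2 ^ (n + 1) * ∑ j ∈ Finset.range (n + 1), 2 ^ j / j ! * u ^ j) := by
  rw [← integral_add_pow_mul_exp_neg_mul_Ioi two_pos, ← integral_const_mul,
    ← setIntegral_Ioi_comp_sub 0 u, zero_add, ← integral_comp_neg_Ioi]
  refine setIntegral_congr_fun measurableSet_Ioi fun v (hv : u < v) => ?_
  rw [expConvIntegrand, abs_of_nonpos (by linarith), abs_of_nonpos (by linarith),
    mul_left_comm, ← exp_add]
  ring_nf

lemma integral_expConvIntegrand_of_nonneg (n : ℕ) {u : ℝ} (hu : 0 ≤ u) :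
    ∫ v, expConvIntegrand n u v
      = exp (-u) * (n ! / 2 ^ (n + 1) * ∑ j ∈ Finset.range (n + 1), 2 ^ j / j ! * u ^ j
          + u ^ (n + 1) / (n + 1) + n ! / 2 ^ (n + 1)) := by
  have hf := integrable_expConvIntegrand n u
  rw [← setIntegral_univ, ← Iic_union_Ioi (a := (0 : ℝ)),
    setIntegral_union (Iic_disjoint_Ioi le_rfl) measurableSet_Ioi hf.integrableOn
      hf.integrableOn,
    ← Iic_union_Ioc_eq_Iic (neg_nonpos.2 hu),
    setIntegral_union (Iic_disjoint_Ioc le_rfl) measurableSet_Ioc hf.integrableOn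
      hf.integrableOn,
    setIntegral_Iic_expConvIntegrand n hu, setIntegral_Ioc_expConvIntegrand n hu,
    setIntegral_Ioi_expConvIntegrand n hu]
  ring

lemma isBigO_abs_pow_abs_pow_cobounded {j N : ℕ} (h : j ≤ N) :
    (fun u : ℝ => |u| ^ j) =O[Bornology.cobounded ℝ] fun u => |u| ^ N := by
  simpa only [norm_pow, norm_eq_abs] using (isBigO_pow_pow_cobounded_of_le (R := ℝ) h).norm_norm

theorem stmt0 (n : ℕ)
    (g : ℝ → ℝ)
    (hg : ∀ u : ℝ, g u = Real.exp |u| * ∫ v : ℝ, |v| ^ n * Real.exp (-|v| - |v + u|)) :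
    (∀ u : ℝ, g (-u) = g u) ∧
    (∀ u : ℝ, 0 ≤ u →
      g u = (n.factorial : ℝ) / 2 ^ (n + 1) *
              ∑ j ∈ Finset.range (n + 1), 2 ^ j / (j.factorial : ℝ) * u ^ j
            + u ^ (n + 1) / (n + 1) + (n.factorial : ℝ) / 2 ^ (n + 1)) ∧
    g =O[Bornology.cobounded ℝ] fun u => |u| ^ (n + 1) := by
  have hg' (u : ℝ) : g u = exp |u| * ∫ v, expConvIntegrand n u v := hg u
  have heven (u : ℝ) : g (-u) = g u := by
    rw [hg', hg', abs_neg]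
    exact congrArg _ (integral_expConvIntegrand_neg n u)
  have hval (u : ℝ) (hu : 0 ≤ u) : g u = n ! / 2 ^ (n + 1) *
      ∑ j ∈ Finset.range (n + 1), 2 ^ j / j ! * u ^ j + u ^ (n + 1) / (n + 1)
        + n ! / 2 ^ (n + 1) := by
    rw [hg', abs_of_nonneg hu, integral_expConvIntegrand_of_nonneg n hu, ← mul_assoc,
      ← exp_add, add_neg_cancel, exp_zero, one_mul]
  refine ⟨heven, hval, ?_⟩
  have hval_abs (u : ℝ) : g u = n ! / 2 ^ (n + 1) *
      ∑ j ∈ Finset.range (n + 1), 2 ^ j / j ! * |u| ^ j + |u| ^ (n + 1) / (n + 1)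
        + n ! / 2 ^ (n + 1) := by
    rw [← hval |u| (abs_nonneg u)]
    rcases abs_choice u with h | h <;> simp only [h, heven]
  have hpow {j : ℕ} (hj : j ≤ n + 1) := isBigO_abs_pow_abs_pow_cobounded hj
  rw [funext hval_abs]
  refine ((IsBigO.fun_sum fun j hj => (hpow ?_).const_mul_left _).const_mul_left _).add ?_
    |>.add ?_
  · exact (Finset.mem_range.mp hj).le
  · simpa only [div_eq_inv_mul] using (hpow le_rfl).const_mul_left ((n : ℝ) + 1)⁻¹
  · simpa using (hpow (Nat.zero_le _)).const_mul_left (n ! / 2 ^ (n + 1) : ℝ)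
end

section
/- Let r > 0 and let φ_n : B_r(0) → ℂ be a sequence of holomorphic functions converging uniformly on compact subsets of B_r(0) to a holomorphic function φ with φ'(0) ≠ 0. Then there exist 0 < κ₁ < r and κ₂ > 0 such that for all sufficiently large n, the restriction of φ_n to B_{κ₁}(0) is a biholomorphism onto its image and B_{κ₂}(φ(0)) ⊂ φ_n(B_{κ₁}(0)). In particular φ_n admits a holomorphic inverse on B_{κ₂}(φ(0)) for all large n. -/
/-!
Put `a := φ'(0) ≠ 0`. By Weierstrass the derivatives `φₙ'` converge locally uniformly to `φ'`,
which is continuous, so on a small closed disc around `0` every `φₙ'` with `n` large stays within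
`|a|/2` of `a`. By the mean value inequality `φₙ` is then an `|a|/2`-Lipschitz perturbation of
`z ↦ a z` on that disc, hence injective there, with image containing a disc around `φₙ(0)` of
radius proportional to `|a|`. Since `φₙ(0) → φ(0)`, a fixed disc around `φ(0)` is covered for all
large `n`.
-/

open Filter Topology Metric Set NNReal

section InverseFunction

variable {𝕜 : Type*} [RCLike 𝕜] {f : 𝕜 → 𝕜} {s : Set 𝕜} {a : 𝕜} {c : ℝ≥0}

lemma ContinuousLinearEquiv.nnnorm_unitsEquivAut_symm (u : 𝕜ˣ) :
    ‖((ContinuousLinearEquiv.unitsEquivAut 𝕜 u).symm : 𝕜 →L[𝕜] 𝕜)‖₊ = ‖(u : 𝕜)‖₊⁻¹ := by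
  have : ((ContinuousLinearEquiv.unitsEquivAut 𝕜 u).symm : 𝕜 →L[𝕜] 𝕜) =
      ContinuousLinearMap.toSpanSingleton 𝕜 ((u⁻¹ : 𝕜ˣ) : 𝕜) := by
    ext; simp
  rw [this, ← NNReal.coe_inj]
  simp

lemma approximatesLinearOn_of_norm_deriv_sub_le (ha : a ≠ 0) (hs : Convex ℝ s)
    (hf : ∀ z ∈ s, DifferentiableAt 𝕜 f z) (hfa : ∀ z ∈ s, ‖deriv f z - a‖ ≤ c) :
    ApproximatesLinearOn f
      (ContinuousLinearEquiv.unitsEquivAut 𝕜 (Units.mk0 a ha) : 𝕜 →L[𝕜] 𝕜) s c := by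
  intro x hx y hy
  have hg : ∀ z ∈ s, HasDerivAt (fun w => f w - w * a) (deriv f z - a) z := fun z hz =>
    (hf z hz).hasDerivAt.sub (hasDerivAt_mul_const a)
  have := hs.norm_image_sub_le_of_norm_deriv_le (fun z hz => (hg z hz).differentiableAt)
    (fun z hz => (hg z hz).deriv ▸ hfa z hz) hy hx
  convert this using 2
  simp only [ContinuousLinearEquiv.coe_coe, ContinuousLinearEquiv.unitsEquivAut_apply,
    Units.val_mk0]
  ring

lemma injOn_of_norm_deriv_sub_le (hs : Convex ℝ s) (hf : ∀ z ∈ s, DifferentiableAt 𝕜 f z)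
    (hfa : ∀ z ∈ s, ‖deriv f z - a‖ ≤ c) (hc : c < ‖a‖) : InjOn f s := by
  have ha : a ≠ 0 := norm_pos_iff.1 (c.coe_nonneg.trans_lt hc)
  refine (approximatesLinearOn_of_norm_deriv_sub_le ha hs hf hfa).injOn (Or.inr ?_)
  rw [ContinuousLinearEquiv.nnnorm_unitsEquivAut_symm, inv_inv, ← NNReal.coe_lt_coe]
  simpa using hc

lemma closedBall_subset_image_of_norm_deriv_sub_le (ha : a ≠ 0) {z₀ : 𝕜} {ρ : ℝ} (hρ : 0 ≤ ρ)
    (hf : ∀ z ∈ closedBall z₀ ρ, DifferentiableAt 𝕜 f z)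
    (hfa : ∀ z ∈ closedBall z₀ ρ, ‖deriv f z - a‖ ≤ c) :
    closedBall (f z₀) ((‖a‖ - c) * ρ) ⊆ f '' closedBall z₀ ρ := by
  have := (approximatesLinearOn_of_norm_deriv_sub_le ha (convex_closedBall z₀ ρ) hf hfa
    ).surjOn_closedBall_of_nonlinearRightInverse
    (ContinuousLinearEquiv.unitsEquivAut 𝕜 (Units.mk0 a ha)).toNonlinearRightInverse hρ
    subset_rfl
  have hN : (ContinuousLinearEquiv.unitsEquivAut 𝕜 (Units.mk0 a ha)).toNonlinearRightInverse.nnnorm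
      = ‖a‖₊⁻¹ := ContinuousLinearEquiv.nnnorm_unitsEquivAut_symm _
  rwa [hN, NNReal.coe_inv, inv_inv, coe_nnnorm] at this

lemma injOn_ball_and_ball_subset_image_of_norm_deriv_sub_le {z₀ w : 𝕜} {ρ : ℝ} (hρ : 0 < ρ)
    (ha : a ≠ 0) (hf : ∀ z ∈ closedBall z₀ ρ, DifferentiableAt 𝕜 f z)
    (hfa : ∀ z ∈ closedBall z₀ ρ, ‖deriv f z - a‖ ≤ ‖a‖ / 2) (hw : dist (f z₀) w < ‖a‖ * ρ / 8) :
    InjOn f (ball z₀ ρ) ∧ ball w (‖a‖ * ρ / 8) ⊆ f '' ball z₀ ρ := by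
  have hc : ((‖a‖₊ / 2 : ℝ≥0) : ℝ) = ‖a‖ / 2 := by simp
  rw [← hc] at hfa
  have hsmall : closedBall z₀ (ρ / 2) ⊆ closedBall z₀ ρ :=
    closedBall_subset_closedBall (by linarith)
  refine ⟨(injOn_of_norm_deriv_sub_le (convex_closedBall z₀ ρ) hf hfa
    (by rw [hc]; linarith [norm_pos_iff.2 ha])).mono ball_subset_closedBall, ?_⟩
  calc ball w (‖a‖ * ρ / 8)
      ⊆ closedBall (f z₀) ((‖a‖ - ↑(‖a‖₊ / 2)) * (ρ / 2)) := by
        refine (ball_subset_ball' ?_).trans ball_subset_closedBall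
        rw [hc, dist_comm]
        linarith
    _ ⊆ f '' closedBall z₀ (ρ / 2) :=
        closedBall_subset_image_of_norm_deriv_sub_le ha (by positivity)
          (fun z hz => hf z (hsmall hz)) (fun z hz => hfa z (hsmall hz))
    _ ⊆ f '' ball z₀ ρ := image_mono (closedBall_subset_ball (by linarith))

end InverseFunction

lemma TendstoLocallyUniformlyOn.exists_closedBall_eventually_dist_lt {α β ι : Type*}
    [PseudoMetricSpace α] [PseudoMetricSpace β] {l : Filter ι} {F : ι → α → β} {f : α → β}
    {U : Set α} (hFf : TendstoLocallyUniformlyOn F f l U) (hU : IsOpen U) {x : α} (hx : x ∈ U)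
    (hf : ContinuousAt f x) {ε : ℝ} (hε : 0 < ε) :
    ∃ ρ > 0, closedBall x ρ ⊆ U ∧ ∀ᶠ i in l, ∀ y ∈ closedBall x ρ, dist (F i y) (f x) < ε := by
  obtain ⟨t, ht, hFt⟩ := Metric.tendstoLocallyUniformlyOn_iff.1 hFf (ε / 2) (half_pos hε) x hx
  rw [hU.nhdsWithin_eq hx] at ht
  obtain ⟨δ, hδ, hfδ⟩ := Metric.continuousAt_iff.1 hf (ε / 2) (half_pos hε)
  obtain ⟨ρ, hρ, hρsub⟩ := nhds_basis_closedBall.mem_iff.1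
    (inter_mem (inter_mem ht (hU.mem_nhds hx)) (ball_mem_nhds x hδ))
  refine ⟨ρ, hρ, fun y hy => (hρsub hy).1.2, hFt.mono fun i hi y hy => ?_⟩
  calc dist (F i y) (f x) ≤ dist (f y) (F i y) + dist (f y) (f x) := dist_triangle_left _ _ _
    _ < ε / 2 + ε / 2 := add_lt_add (hi y (hρsub hy).1.1) (hfδ (hρsub hy).2)
    _ = ε := add_halves ε

theorem stmt2 (r : ℝ) (hr : 0 < r) (φn : ℕ → ℂ → ℂ) (φ : ℂ → ℂ)
    (hφn : ∀ n, DifferentiableOn ℂ (φn n) (ball (0 : ℂ) r))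
    (hφ : DifferentiableOn ℂ φ (ball (0 : ℂ) r))
    (hconv : ∀ K : Set ℂ, K ⊆ ball (0 : ℂ) r → IsCompact K →
      TendstoUniformlyOn (fun n => φn n) φ atTop K)
    (hderiv : deriv φ 0 ≠ 0) :
    ∃ κ₁ κ₂ : ℝ, 0 < κ₁ ∧ κ₁ < r ∧ 0 < κ₂ ∧
      ∀ᶠ n in atTop,
        Set.InjOn (φn n) (ball (0 : ℂ) κ₁) ∧
        ball (φ 0) κ₂ ⊆ φn n '' ball (0 : ℂ) κ₁ := by
  set a := deriv φ 0
  have h0 : (0 : ℂ) ∈ ball (0 : ℂ) r := mem_ball_self hr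
  have hlim : TendstoLocallyUniformlyOn φn φ atTop (ball 0 r) :=
    (tendstoLocallyUniformlyOn_iff_forall_isCompact isOpen_ball).2 hconv
  have hderiv_cont : ContinuousAt (deriv φ) 0 :=
    (hφ.analyticOnNhd isOpen_ball).deriv.continuousOn.continuousAt (isOpen_ball.mem_nhds h0)
  obtain ⟨ρ, hρ, hρU, hderiv_close⟩ :=
    (hlim.deriv (.of_forall hφn) isOpen_ball).exists_closedBall_eventually_dist_lt isOpen_ball h0
      hderiv_cont (half_pos (norm_pos_iff.2 hderiv))
  have hρr : ρ < r := by
    simpa [abs_of_pos hρ] using hρU (show (ρ : ℂ) ∈ closedBall 0 ρ by simp [abs_of_pos hρ])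
  have hκ : 0 < ‖a‖ * ρ / 8 := by positivity
  refine ⟨ρ, ‖a‖ * ρ / 8, hρ, hρr, hκ, ?_⟩
  filter_upwards [hderiv_close, (hlim.tendsto_at h0).eventually (ball_mem_nhds _ hκ)]
    with n hderiv_n hφn0
  exact injOn_ball_and_ball_subset_image_of_norm_deriv_sub_le hρ hderiv
    (fun z hz => (hφn n).differentiableAt (isOpen_ball.mem_nhds (hρU hz)))
    (fun z hz => by simpa [dist_eq_norm] using (hderiv_n z hz).le) hφn0
end

section
/- For every integer k ≥ 3, the Dirichlet series Z_{P_k}(s) = ∑_{n≥1} P_k(n)^{-s} has a meromorphic continuation near s = 1/2 with a simple pole at s = 1/2 of residue √(1/(2(k-2))). -/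
open Filter Topology

open Complex

/-- The `n`-th `k`-gonal number, as a real number (`n ≥ 1`). -/
noncomputable def polyNum (k n : ℕ) : ℝ :=
  (((k : ℝ) - 2) * (n : ℝ) ^ 2 - ((k : ℝ) - 4) * (n : ℝ)) / 2

noncomputable def zetaA : ℂ → ℂ := Function.update (fun z => (z - 1) * riemannZeta z) 1 1

lemma zetaA_eq {z : ℂ} (hz : z ≠ 1) : zetaA z = (z - 1) * riemannZeta z :=
  Function.update_of_ne hz _ _

lemma zetaA_one : zetaA 1 = 1 := Function.update_self _ _ _

lemma zetaA_continuousAt_one : ContinuousAt zetaA 1 := by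
  have h1 : Tendsto zetaA (𝓝[≠] 1) (𝓝 1) := by
    apply riemannZeta_residue_one.congr'
    filter_upwards [self_mem_nhdsWithin] with z hz
    exact (zetaA_eq hz).symm
  have h2 : Tendsto zetaA (pure 1) (𝓝 1) := by
    simpa [zetaA_one] using tendsto_pure_nhds zetaA 1
  have h3 := tendsto_sup.mpr ⟨h1, h2⟩
  rw [nhdsNE_sup_pure] at h3
  rw [ContinuousAt, zetaA_one]
  exact h3

lemma zetaA_analyticAt (z : ℂ) : AnalyticAt ℂ zetaA z := by
  rcases eq_or_ne z 1 with rfl | hz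
  · apply Complex.analyticAt_of_differentiable_on_punctured_nhds_of_continuousAt
      _ zetaA_continuousAt_one
    filter_upwards [self_mem_nhdsWithin] with w hw
    have heq : zetaA =ᶠ[𝓝 w] fun u => (u - 1) * riemannZeta u := by
      filter_upwards [isOpen_ne.mem_nhds (by exact hw : w ≠ 1)] with u hu
      exact zetaA_eq hu
    exact DifferentiableAt.congr_of_eventuallyEq
      ((differentiableAt_id.sub (differentiableAt_const 1)).mul
        (differentiableAt_riemannZeta hw)) heq
  · have heq : (fun u => (u - 1) * riemannZeta u) =ᶠ[𝓝 z] zetaA := by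
      filter_upwards [isOpen_ne.mem_nhds (hz : z ≠ 1)] with u hu
      exact (zetaA_eq hu).symm
    have hd : DifferentiableOn ℂ (fun u => (u - 1) * riemannZeta u) {w : ℂ | w ≠ 1} :=
      fun w hw => ((differentiableAt_id.sub (differentiableAt_const 1)).mul
        (differentiableAt_riemannZeta hw)).differentiableWithinAt
    exact AnalyticAt.congr ((hd.analyticOnNhd isOpen_ne) z hz) heq

noncomputable def pnA (k : ℕ) : ℝ := ((k:ℝ) - 2)/2

noncomputable def pnG (k n : ℕ) (s : ℂ) : ℂ :=
  ((polyNum k (n+1) : ℝ) : ℂ) ^ (-s) - (((pnA k * ((n:ℝ)+1)^2 : ℝ)) : ℂ) ^ (-s)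

noncomputable def pnR (k : ℕ) (s : ℂ) : ℂ := ∑' n, pnG k n s

def Uball : Set ℂ := Metric.ball (1/2 : ℂ) (1/16)

lemma mem_Uball {s : ℂ} (hs : s ∈ Uball) :
    ‖s‖ ≤ 1 ∧ 7/16 ≤ s.re ∧ s.re ≤ 9/16 := by
  rw [Uball, Metric.mem_ball, Complex.dist_eq] at hs
  have h1 : |(s - 1/2).re| ≤ ‖s - 1/2‖ := Complex.abs_re_le_norm _
  have h2 : (s - 1/2).re = s.re - 1/2 := by simp
  rw [h2] at h1
  rw [abs_le] at h1
  have h3 : ‖s‖ ≤ ‖s - 1/2‖ + ‖(1/2 : ℂ)‖ := by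
    simpa using norm_add_le (s - 1/2) (1/2)
  have h4 : ‖(1/2 : ℂ)‖ = 1/2 := by
    rw [show (1/2 : ℂ) = ((1/2 : ℝ) : ℂ) by norm_num, Complex.norm_real]
    norm_num
  constructor
  · rw [h4] at h3; linarith
  · constructor <;> linarith [h1.1, h1.2, hs]

lemma pnA_half {k : ℕ} (hk : 3 ≤ k) : 1/2 ≤ pnA k := by
  have : (3:ℝ) ≤ (k:ℝ) := by exact_mod_cast hk
  rw [pnA]; linarith

lemma pnA_pos {k : ℕ} (hk : 3 ≤ k) : 0 < pnA k := lt_of_lt_of_le (by norm_num) (pnA_half hk)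

lemma polyNum_succ_pos {k : ℕ} (hk : 3 ≤ k) (n : ℕ) : 1 ≤ polyNum k (n+1) := by
  have hk3 : (3:ℝ) ≤ (k:ℝ) := by exact_mod_cast hk
  have hm : (1:ℝ) ≤ ((n+1 : ℕ) : ℝ) := by exact_mod_cast Nat.one_le_iff_ne_zero.mpr (Nat.succ_ne_zero n)
  rw [polyNum]
  set m : ℝ := ((n+1 : ℕ) : ℝ)
  nlinarith [mul_nonneg (sub_nonneg.mpr hm) (by linarith : (0:ℝ) ≤ (k:ℝ) - 2), sq_nonneg m]

lemma pnG_bound {k : ℕ} (hk : 3 ≤ k) (n : ℕ) {s : ℂ} (hs : s ∈ Uball) :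
    ‖pnG k n s‖ ≤ 8 * ((n:ℝ)+1) ^ (-(15/8) : ℝ) := by
  obtain ⟨habs, hre1, hre2⟩ := mem_Uball hs
  have hk3 : (3:ℝ) ≤ (k:ℝ) := by exact_mod_cast hk
  have ha := pnA_pos hk
  have ha2 := pnA_half hk
  rcases Nat.eq_zero_or_pos n with rfl | hn
  · -- n = 0, first term is 1
    have h1 : polyNum k 1 = 1 := by rw [polyNum]; push_cast; ring
    have hexpr : pnG k 0 s = 1 - ((pnA k : ℝ) : ℂ) ^ (-s) := by
      rw [pnG, h1]
      norm_num
    rw [hexpr]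
    have h2 : ‖((pnA k : ℝ) : ℂ) ^ (-s)‖ ≤ 2 := by
      rw [Complex.norm_cpow_eq_rpow_re_of_pos ha]
      have e1 : pnA k ^ (-s).re ≤ (1/2 : ℝ) ^ (-s).re := by
        apply Real.rpow_le_rpow_of_nonpos (by norm_num) ha2
        simp only [Complex.neg_re]; linarith
      have e2 : (1/2 : ℝ) ^ (-s).re = 2 ^ (s.re) := by
        rw [show (1/2 : ℝ) = 2⁻¹ by norm_num, Real.inv_rpow (by norm_num),
          Complex.neg_re, Real.rpow_neg (by norm_num)]
        simp
      have e3 : (2:ℝ) ^ (s.re) ≤ 2 ^ (1:ℝ) :=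
        Real.rpow_le_rpow_of_exponent_le (by norm_num) (by linarith)
      rw [Real.rpow_one] at e3
      linarith
    have hbound : ‖(1:ℂ) - ((pnA k : ℝ) : ℂ) ^ (-s)‖ ≤ 3 := by
      refine le_trans (norm_sub_le _ _) ?_
      simp only [norm_one]
      linarith
    refine le_trans hbound ?_
    norm_num
  · -- n ≥ 1, so m ≥ 2
    set m : ℝ := (n:ℝ) + 1 with hm_def
    have hm2 : 2 ≤ m := by
      have : (1:ℝ) ≤ (n:ℝ) := by exact_mod_cast hn
      rw [hm_def]; linarith
    have hm0 : 0 < m := by linarith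
    have hm1 : 1 ≤ m := by linarith
    set c : ℝ := ((k:ℝ) - 4)/((k:ℝ) - 2) with hc_def
    have hk2 : (0:ℝ) < (k:ℝ) - 2 := by linarith
    have hc : |c| ≤ 1 := by
      rw [hc_def, abs_div, abs_of_pos hk2, div_le_one hk2, abs_le]
      constructor <;> linarith
    have hc1 := abs_le.mp hc
    set t : ℝ := 1 - c/m with ht_def
    have hcm : |c/m| ≤ 1/2 := by
      rw [abs_div, abs_of_pos hm0, div_le_iff₀ hm0]
      calc |c| ≤ 1 := hc
        _ ≤ 1/2 * m := by linarith
    rw [abs_le] at hcm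
    have ht12 : 1/2 ≤ t := by rw [ht_def]; linarith [hcm.2]
    have ht0 : 0 < t := lt_of_lt_of_le one_half_pos ht12
    -- factorization
    set y : ℝ := pnA k * m ^ 2 with hy_def
    have hy0 : 0 < y := by rw [hy_def]; positivity
    have hxyt : polyNum k (n+1) = y * t := by
      rw [polyNum, hy_def, ht_def, pnA, hc_def]
      push_cast
      rw [hm_def]
      field_simp
    -- log bound
    have hlog : |Real.log t| ≤ 2/m := by
      rw [abs_le]
      constructor
      · rw [neg_le, ← Real.log_inv]
        refine le_trans (Real.log_le_sub_one_of_pos (by positivity)) ?_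
        have he : t⁻¹ - 1 = (c/m)/t := by
          rw [eq_div_iff ht0.ne', sub_mul, inv_mul_cancel₀ ht0.ne', ht_def]
          ring
        rw [he, div_le_div_iff₀ ht0 hm0]
        have h7 : c/m * m = c := by field_simp
        rw [h7, ht_def]
        linarith [hcm.2, hc1.2]
      · refine le_trans (Real.log_le_sub_one_of_pos ht0) ?_
        rw [ht_def]
        have h9 : -c ≤ 2 := by linarith [hc1.1]
        calc 1 - c/m - 1 = (-c)/m := by ring
          _ ≤ 2/m := by gcongr
    -- split the cpow
    have habs_s : ‖-s‖ ≤ 1 := by rwa [norm_neg]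
    have hsplit : ((polyNum k (n+1) : ℝ) : ℂ) ^ (-s)
        = ((y : ℝ) : ℂ) ^ (-s) * ((t : ℝ) : ℂ) ^ (-s) := by
      rw [show ((polyNum k (n+1) : ℝ) : ℂ) = ((y : ℂ)) * ((t : ℂ)) by
        rw [← Complex.ofReal_mul, hxyt]]
      exact Complex.mul_cpow_ofReal_nonneg hy0.le ht0.le (-s)
    have hGeq : pnG k n s = ((y:ℝ):ℂ) ^ (-s) * (((t:ℝ):ℂ) ^ (-s) - 1) := by
      rw [pnG, hsplit, mul_sub, mul_one]
    have htC : ((t:ℝ):ℂ) ^ (-s) = Complex.exp ((Real.log t : ℂ) * (-s)) := by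
      rw [Complex.cpow_def_of_ne_zero (by exact_mod_cast ht0.ne' : ((t:ℝ):ℂ) ≠ 0),
        Complex.ofReal_log ht0.le]
    have hz1 : ‖(Real.log t : ℂ) * (-s)‖ ≤ 2/m := by
      rw [norm_mul, Complex.norm_real, Real.norm_eq_abs]
      calc |Real.log t| * ‖-s‖ ≤ (2/m) * 1 :=
        mul_le_mul hlog habs_s (norm_nonneg _) (by positivity)
        _ = 2/m := mul_one _
    have hz2 : ‖(Real.log t : ℂ) * (-s)‖ ≤ 1 := by
      refine le_trans hz1 ?_
      rw [div_le_one hm0]; linarith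
    have hexp : ‖((t:ℝ):ℂ) ^ (-s) - 1‖ ≤ 4/m := by
      rw [htC]
      calc ‖Complex.exp _ - 1‖ ≤ 2 * ‖(Real.log t : ℂ) * (-s)‖ :=
        Complex.norm_exp_sub_one_le hz2
        _ ≤ 2 * (2/m) := by linarith
        _ = 4/m := by ring
    have hynorm : ‖((y:ℝ):ℂ) ^ (-s)‖ ≤ 2 * m ^ (-(7/8) : ℝ) := by
      rw [Complex.norm_cpow_eq_rpow_re_of_pos hy0]
      have e0 : m^2/2 ≤ y := by rw [hy_def]; nlinarith [sq_nonneg m]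
      have e1 : y ^ (-s).re ≤ (m^2/2) ^ (-s).re := by
        apply Real.rpow_le_rpow_of_nonpos (by positivity) e0
        simp only [Complex.neg_re]; linarith
      have e2 : (m^2/2 : ℝ) ^ (-s).re = (m^2) ^ (-s).re * 2 ^ (s.re) := by
        rw [Real.div_rpow (by positivity) (by norm_num), Complex.neg_re,
          Real.rpow_neg (by norm_num : (0:ℝ) ≤ 2), division_def, inv_inv]
      have e3 : ((m:ℝ)^2) ^ (-s).re = m ^ (2 * (-s).re) := by
        rw [← Real.rpow_natCast m 2, ← Real.rpow_mul hm0.le]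
        norm_num
      have e4 : m ^ (2 * (-s).re) ≤ m ^ (-(7/8) : ℝ) := by
        apply Real.rpow_le_rpow_of_exponent_le hm1
        simp only [Complex.neg_re]; linarith
      have e5 : (2:ℝ) ^ (s.re) ≤ 2 := by
        have := Real.rpow_le_rpow_of_exponent_le (by norm_num : (1:ℝ) ≤ 2) (by linarith : s.re ≤ 1)
        rwa [Real.rpow_one] at this
      calc y ^ (-s).re ≤ (m^2/2) ^ (-s).re := e1
        _ = (m^2) ^ (-s).re * 2 ^ (s.re) := e2
        _ ≤ m ^ (-(7/8):ℝ) * 2 := by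
            rw [e3]
            exact mul_le_mul e4 e5 (by positivity) (by positivity)
        _ = 2 * m ^ (-(7/8):ℝ) := by ring
    have hfinal : ‖pnG k n s‖ ≤ (2 * m ^ (-(7/8):ℝ)) * (4/m) := by
      rw [hGeq, norm_mul]
      exact mul_le_mul hynorm hexp (norm_nonneg _) (by positivity)
    refine le_trans hfinal ?_
    have : (2 * m ^ (-(7/8):ℝ)) * (4/m) = 8 * m ^ (-(15/8) : ℝ) := by
      rw [show m ^ (-(15/8) : ℝ) = m ^ (((-(7/8)) + (-1) : ℝ)) by norm_num,
        Real.rpow_add hm0, Real.rpow_neg_one]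
      field_simp
      ring
    rw [this]

lemma summable_u : Summable (fun n : ℕ => 8 * ((n:ℝ)+1) ^ (-(15/8) : ℝ)) := by
  apply Summable.mul_left
  have h := Real.summable_nat_rpow.mpr (show (-(15/8):ℝ) < -1 by norm_num)
  have h2 := (summable_nat_add_iff 1).mpr h
  apply h2.congr
  intro n
  push_cast
  ring_nf

lemma pnG_differentiable {k : ℕ} (hk : 3 ≤ k) (n : ℕ) : Differentiable ℂ (pnG k n) := by
  have h1 : (0:ℝ) < polyNum k (n+1) := lt_of_lt_of_le one_pos (polyNum_succ_pos hk n)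
  have h2 : (0:ℝ) < pnA k * ((n:ℝ)+1)^2 := by
    have := pnA_pos hk
    positivity
  apply Differentiable.sub
  · exact Differentiable.const_cpow differentiable_id.neg
      (Or.inl (Complex.ofReal_ne_zero.mpr h1.ne'))
  · exact Differentiable.const_cpow differentiable_id.neg
      (Or.inl (Complex.ofReal_ne_zero.mpr h2.ne'))

lemma pnR_diffOn {k : ℕ} (hk : 3 ≤ k) : DifferentiableOn ℂ (pnR k) Uball := by
  apply differentiableOn_tsum_of_summable_norm summable_u
    (fun n => (pnG_differentiable hk n).differentiableOn) Metric.isOpen_ball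
  exact fun i w hw => pnG_bound hk i hw

lemma pnG_summable {k : ℕ} (hk : 3 ≤ k) {s : ℂ} (hs : s ∈ Uball) :
    Summable (fun n => pnG k n s) :=
  Summable.of_norm_bounded summable_u (fun n => pnG_bound hk n hs)

lemma series_eq {k : ℕ} (hk : 3 ≤ k) {s : ℂ} (hs : s ∈ Uball) (hre : 1/2 < s.re) :
    ∑' n : ℕ, ((polyNum k (n+1) : ℝ) : ℂ) ^ (-s)
      = (pnA k : ℂ) ^ (-s) * riemannZeta (2*s) + pnR k s := by
  have ha := pnA_pos hk
  have h2s : 1 < (2*s).re := by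
    have : (2*s).re = 2*s.re := by simp [Complex.mul_re]
    rw [this]; linarith
  -- each auxiliary term
  have haterm : ∀ n : ℕ, ((pnA k * ((n:ℝ)+1)^2 : ℝ) : ℂ) ^ (-s)
      = (pnA k : ℂ) ^ (-s) * ((((n:ℝ)+1 : ℝ)) : ℂ) ^ (-(2*s)) := by
    intro n
    have hcast : ((pnA k * ((n:ℝ)+1)^2 : ℝ) : ℂ)
        = ((pnA k : ℝ) : ℂ) * (((((n:ℝ)+1)^2 : ℝ)) : ℂ) := by push_cast; ring
    rw [hcast, Complex.mul_cpow_ofReal_nonneg ha.le (by positivity)]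
    congr 1
    have harg : -Real.pi < (2:ℕ) * ((((n:ℝ)+1 : ℝ)) : ℂ).arg ∧
        (2:ℕ) * ((((n:ℝ)+1 : ℝ)) : ℂ).arg ≤ Real.pi := by
      rw [Complex.arg_ofReal_of_nonneg (by positivity)]
      simp [Real.pi_pos, Real.pi_pos.le]
    have := (Complex.cpow_nat_mul' (x := ((((n:ℝ)+1 : ℝ)) : ℂ)) (n := 2)
      harg.1 harg.2 (-s)).symm
    rw [show ((((n:ℝ)+1)^2 : ℝ) : ℂ) = ((((n:ℝ)+1 : ℝ)) : ℂ) ^ (2:ℕ) by push_cast; ring]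
    rw [this]
    congr 1
    push_cast
    ring
  have hnorm : ∀ n : ℕ, ‖((((n:ℝ)+1 : ℝ)) : ℂ) ^ (-(2*s))‖ = ((n:ℝ)+1) ^ (-(2*s.re)) := by
    intro n
    rw [Complex.norm_cpow_eq_rpow_re_of_pos (by positivity)]
    congr 1
    simp [Complex.mul_re]
  have hsumN : Summable (fun n : ℕ => ((((n:ℝ)+1 : ℝ)) : ℂ) ^ (-(2*s))) := by
    have h := Real.summable_nat_rpow.mpr (show -(2*s.re) < -1 by linarith)
    have h2 := (summable_nat_add_iff 1).mpr h
    have h3 : Summable (fun n : ℕ => ((n:ℝ)+1) ^ (-(2*s.re))) :=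
      h2.congr (fun n => by norm_cast)
    exact Summable.of_norm (h3.congr (fun n => (hnorm n).symm))
  have hsummA : Summable (fun n : ℕ => ((pnA k * ((n:ℝ)+1)^2 : ℝ) : ℂ) ^ (-s)) := by
    apply Summable.congr (hsumN.mul_left ((pnA k : ℂ) ^ (-s)))
    intro n
    exact (haterm n).symm
  have hzeta : riemannZeta (2*s) = ∑' n : ℕ, ((((n:ℝ)+1 : ℝ)) : ℂ) ^ (-(2*s)) := by
    rw [zeta_eq_tsum_one_div_nat_add_one_cpow h2s]
    apply tsum_congr
    intro n
    rw [one_div, ← Complex.cpow_neg]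
    congr 1
    push_cast
    ring
  have hsplit : ∀ n : ℕ, ((polyNum k (n+1) : ℝ) : ℂ) ^ (-s)
      = pnG k n s + ((pnA k * ((n:ℝ)+1)^2 : ℝ) : ℂ) ^ (-s) := by
    intro n; rw [pnG]; ring
  calc ∑' n : ℕ, ((polyNum k (n+1) : ℝ) : ℂ) ^ (-s)
      = ∑' n : ℕ, (pnG k n s + ((pnA k * ((n:ℝ)+1)^2 : ℝ) : ℂ) ^ (-s)) :=
        tsum_congr hsplit
    _ = pnR k s + ∑' n : ℕ, ((pnA k * ((n:ℝ)+1)^2 : ℝ) : ℂ) ^ (-s) := by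
        rw [Summable.tsum_add (pnG_summable hk hs) hsummA, pnR]
    _ = pnR k s + (pnA k : ℂ) ^ (-s) * ∑' n : ℕ, ((((n:ℝ)+1 : ℝ)) : ℂ) ^ (-(2*s)) := by
        rw [tsum_congr haterm, tsum_mul_left]
    _ = (pnA k : ℂ) ^ (-s) * riemannZeta (2*s) + pnR k s := by rw [← hzeta]; ring

noncomputable def pnZ (k : ℕ) (s : ℂ) : ℂ :=
  (pnA k : ℂ) ^ (-s) * (zetaA (2*s) / (2*s - 1)) + pnR k s

theorem stmt4 (k : ℕ) (hk : 3 ≤ k) :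
    ∃ (U : Set ℂ) (Z : ℂ → ℂ), (1 / 2 : ℂ) ∈ U ∧ IsOpen U ∧
      MeromorphicOn Z U ∧
      (∀ s ∈ U, 1 / 2 < s.re →
        Z s = ∑' n : ℕ, ((polyNum k (n + 1) : ℝ) : ℂ) ^ (-s)) ∧
      Tendsto (fun s : ℂ => (s - 1 / 2) * Z s) (𝓝[≠] (1 / 2))
        (𝓝 ((Real.sqrt (1 / (2 * ((k : ℝ) - 2))) : ℝ) : ℂ)) := by
  have ha := pnA_pos hk
  have hk3 : (3:ℝ) ≤ (k:ℝ) := by exact_mod_cast hk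
  have haC : ((pnA k : ℝ) : ℂ) ≠ 0 := Complex.ofReal_ne_zero.mpr ha.ne'
  have hcpow_diff : Differentiable ℂ (fun s : ℂ => ((pnA k : ℝ) : ℂ) ^ (-s)) :=
    Differentiable.const_cpow differentiable_id.neg (Or.inl haC)
  refine ⟨Uball, pnZ k, Metric.mem_ball_self (by norm_num), Metric.isOpen_ball, ?_, ?_, ?_⟩
  · -- MeromorphicOn
    intro x hx
    apply MeromorphicAt.add
    · apply MeromorphicAt.mul
      · exact ((hcpow_diff.analyticAt x)).meromorphicAt
      · apply MeromorphicAt.div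
        · refine AnalyticAt.meromorphicAt ?_
          exact (zetaA_analyticAt (2*x)).comp (analyticAt_const.mul analyticAt_id)
        · exact ((analyticAt_const.mul analyticAt_id).sub analyticAt_const).meromorphicAt
    · exact (((pnR_diffOn hk).analyticOnNhd Metric.isOpen_ball) x hx).meromorphicAt
  · -- series identity
    intro s hsU hre
    rw [pnZ, series_eq hk hsU hre]
    have h2s1 : (2*s) ≠ 1 := by
      intro h
      have : (2*s).re = 2*s.re := by simp [Complex.mul_re]
      rw [h] at this
      simp at this
      linarith
    rw [zetaA_eq h2s1, mul_div_cancel_left₀ _ (sub_ne_zero.mpr h2s1)]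
  · -- the limit
    set G : ℂ → ℂ := fun s => ((pnA k : ℝ) : ℂ) ^ (-s) * (zetaA (2*s) / 2)
      + (s - 1/2) * pnR k s with hG_def
    have hcont : ContinuousAt G (1/2) := by
      apply ContinuousAt.add
      · apply ContinuousAt.mul (hcpow_diff.continuous.continuousAt)
        apply ContinuousAt.div_const
        have h1 : ContinuousAt zetaA ((fun s : ℂ => 2*s) (1/2)) := by
          have : (fun s : ℂ => 2*s) (1/2) = 1 := by norm_num
          rw [this]
          exact (zetaA_analyticAt 1).continuousAt
        exact h1.comp (by fun_prop)
      · apply ContinuousAt.mul (by fun_prop)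
        exact ((pnR_diffOn hk).continuousOn).continuousAt
          (Metric.isOpen_ball.mem_nhds (Metric.mem_ball_self (by norm_num)))
    have hval : G (1/2) = ((Real.sqrt (1 / (2 * ((k : ℝ) - 2))) : ℝ) : ℂ) := by
      rw [hG_def]
      simp only [show (2:ℂ) * (1/2) = 1 by norm_num, zetaA_one, sub_self, zero_mul, add_zero]
      have hexp : (-(1/2 : ℂ)) = (((-(1/2) : ℝ)) : ℂ) := by norm_num
      rw [hexp, ← Complex.ofReal_cpow ha.le]
      rw [show (1 : ℂ)/2 = ((1/2 : ℝ) : ℂ) by norm_num, ← Complex.ofReal_mul]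
      congr 1
      -- real computation
      have h4a : 1/(2*((k:ℝ)-2)) = (4 * pnA k)⁻¹ := by
        rw [show 4 * pnA k = 2*((k:ℝ)-2) by rw [pnA]; ring, one_div]
      rw [h4a, Real.sqrt_inv, Real.sqrt_mul (by norm_num : (0:ℝ) ≤ 4),
        show Real.sqrt 4 = 2 by
          rw [show (4:ℝ) = 2^2 by norm_num, Real.sqrt_sq (by norm_num)]]
      rw [Real.rpow_neg ha.le, ← Real.sqrt_eq_rpow]
      have hs0 : Real.sqrt (pnA k) ≠ 0 := (Real.sqrt_pos.mpr ha).ne'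
      field_simp
    have htend : Tendsto G (𝓝[≠] (1/2)) (𝓝 ((Real.sqrt (1 / (2 * ((k : ℝ) - 2))) : ℝ) : ℂ)) := by
      rw [← hval]
      exact (hcont.tendsto).mono_left nhdsWithin_le_nhds
    apply htend.congr'
    filter_upwards [self_mem_nhdsWithin] with s hs
    have hs2 : (2*s - 1) ≠ 0 := by
      intro h
      apply hs
      have : s = 1/2 := by linear_combination h/2
      simpa using this
    have key : (s - 1/2) * (zetaA (2*s) / (2*s - 1)) = zetaA (2*s) / 2 := by
      rw [mul_div_assoc', div_eq_div_iff hs2 two_ne_zero]; ring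
    rw [hG_def, pnZ]
    beta_reduce
    linear_combination (-(((pnA k : ℝ) : ℂ) ^ (-s))) * key
end

section
/- Let f : ℕ → ℕ₀ with associated Dirichlet series L_f(s) = ∑_{n≥1} f(n) n^{−s} convergent in some half-plane, and suppose L_f has largest pole at α > 0 with ∑_{1 ≤ m ≤ x} f(m) ∼ (ω_α/α) x^α as x → ∞, where ω_α = Res_{s=α} L_f(s). Then for ρ > 0 and real t, the generating function G_f(z) = ∏_{n≥1} (1 − e^{−nz})^{−f(n)} satisfies |G_f(ρ + 2πit)| / G_f(ρ) ≤ ∏_{m≥1} (1 + 16‖mt‖² / (e^{mρ} m² ρ²))^{−f(m)/2}, where ‖x‖ denotes the distance from x to the nearest integer. -/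
open Real Filter Topology

/-!
Write `q = e^{-mρ}` and `θ = mt`. Then `|1 - q e^{-2πiθ}|² = (1 - q)² + 2q(1 - cos 2πθ)`, and
the bounds `1 - cos 2πθ ≥ 8‖θ‖²` and `1 - q ≤ mρ` give, factor by factor,
`|1 - q e^{-2πiθ}|² ≥ (1 - q)² (1 + 16‖θ‖² / (e^{mρ} m² ρ²))`.
Raising this to the power `-f(m)/2` and multiplying over `m` gives the inequality. All three
products are exponentials of absolutely convergent series of logarithms, since the convergence of
the Dirichlet series makes `f` polynomially bounded, so `∑ f(m) e^{-mρ}` converges.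
-/

lemma eight_mul_sq_abs_sub_round_le_one_sub_cos (θ : ℝ) :
    8 * |θ - round θ| ^ 2 ≤ 1 - cos (2 * π * θ) := by
  have hcos : cos (2 * π * θ) = cos (2 * π * (θ - round θ)) := by
    rw [mul_sub, show 2 * π * (round θ : ℝ) = (round θ : ℤ) * (2 * π) by ring,
      cos_sub_int_mul_two_pi]
  have hle : |2 * π * (θ - round θ)| ≤ π := by
    rw [abs_mul, abs_of_pos (by positivity : 0 < 2 * π)]
    nlinarith [abs_sub_round θ, pi_pos]
  have hsq : 2 / π ^ 2 * (2 * π * (θ - round θ)) ^ 2 = 8 * |θ - round θ| ^ 2 := by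
    rw [sq_abs]; field_simp; ring
  linarith [cos_le_one_sub_mul_cos_sq hle]

lemma norm_one_sub_exp_sq (z : ℂ) :
    ‖1 - Complex.exp z‖ ^ 2 = (1 - rexp z.re) ^ 2 + 2 * rexp z.re * (1 - cos z.im) := by
  rw [Complex.sq_norm, Complex.normSq_apply]
  simp only [Complex.sub_re, Complex.sub_im, Complex.one_re, Complex.one_im, Complex.exp_re,
    Complex.exp_im]
  linear_combination rexp z.re ^ 2 * sin_sq_add_cos_sq z.im

lemma sq_one_sub_exp_neg_mul_le {x : ℝ} (hx : 0 < x) (θ : ℝ) :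
    (1 - rexp (-x)) ^ 2 * (1 + 16 * |θ - round θ| ^ 2 / (rexp x * x ^ 2))
      ≤ (1 - rexp (-x)) ^ 2 + 2 * rexp (-x) * (1 - cos (2 * π * θ)) := by
  have h0 : 0 ≤ 1 - rexp (-x) := by linarith [exp_le_one_iff.mpr (neg_nonpos.mpr hx.le)]
  have h1 : (1 - rexp (-x)) / x ≤ 1 := (div_le_one hx).mpr (by linarith [add_one_le_exp (-x)])
  have key : (1 - rexp (-x)) ^ 2 * (16 * |θ - round θ| ^ 2 / (rexp x * x ^ 2))
      ≤ 16 * |θ - round θ| ^ 2 * rexp (-x) :=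
    calc (1 - rexp (-x)) ^ 2 * (16 * |θ - round θ| ^ 2 / (rexp x * x ^ 2))
        = ((1 - rexp (-x)) / x) ^ 2 * (16 * |θ - round θ| ^ 2 * rexp (-x)) := by
          rw [exp_neg]; field_simp
      _ ≤ 16 * |θ - round θ| ^ 2 * rexp (-x) :=
          mul_le_of_le_one_left (by positivity) (pow_le_one₀ (by positivity) h1)
  nlinarith [eight_mul_sq_abs_sub_round_le_one_sub_cos θ, exp_pos (-x)]

lemma sq_one_sub_exp_mul_le_norm_sq {m ρ : ℝ} (hmρ : 0 < m * ρ) (t : ℝ) :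
    (1 - rexp (-m * ρ)) ^ 2 *
        (1 + 16 * |m * t - round (m * t)| ^ 2 / (rexp (m * ρ) * m ^ 2 * ρ ^ 2))
      ≤ ‖1 - Complex.exp (-(m : ℂ) * (ρ + 2 * π * Complex.I * t))‖ ^ 2 := by
  have hre : (-(m : ℂ) * (ρ + 2 * π * Complex.I * t)).re = -(m * ρ) := by simp
  have him : (-(m : ℂ) * (ρ + 2 * π * Complex.I * t)).im = -(2 * π * (m * t)) := by
    simp; ring
  rw [norm_one_sub_exp_sq, hre, him, cos_neg, neg_mul,
    show rexp (m * ρ) * m ^ 2 * ρ ^ 2 = rexp (m * ρ) * (m * ρ) ^ 2 by ring]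
  exact sq_one_sub_exp_neg_mul_le hmρ _

lemma log_one_sub_exp_add_half_log_le {m ρ : ℝ} (hmρ : 0 < m * ρ) (t : ℝ) :
    log (1 - rexp (-m * ρ)) +
        log (1 + 16 * |m * t - round (m * t)| ^ 2 / (rexp (m * ρ) * m ^ 2 * ρ ^ 2)) / 2
      ≤ log ‖1 - Complex.exp (-(m : ℂ) * (ρ + 2 * π * Complex.I * t))‖ := by
  have hq : 0 < 1 - rexp (-m * ρ) := by
    rw [sub_pos, exp_lt_one_iff, neg_mul, neg_lt_zero]; exact hmρ
  have hc : 0 < 1 + 16 * |m * t - round (m * t)| ^ 2 / (rexp (m * ρ) * m ^ 2 * ρ ^ 2) := by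
    positivity
  have h := log_le_log (by positivity) (sq_one_sub_exp_mul_le_norm_sq hmρ t)
  rw [log_mul (by positivity) hc.ne', log_pow, log_pow] at h
  push_cast at h
  linarith

lemma summable_mul_exp_neg_of_summable_div_rpow {a : ℕ → ℝ} {s ρ : ℝ} (hρ : 0 < ρ)
    (h : Summable fun n : ℕ => a n / ((n : ℝ) + 1) ^ s) :
    Summable fun n : ℕ => a n * rexp (-((n : ℝ) + 1) * ρ) := by
  have hdecay : Tendsto (fun n : ℕ => ((n : ℝ) + 1) ^ s * rexp (-ρ * ((n : ℝ) + 1)))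
      atTop (𝓝 0) :=
    (tendsto_rpow_mul_exp_neg_mul_atTop_nhds_zero s ρ hρ).comp
      (tendsto_atTop_add_const_right _ 1 tendsto_natCast_atTop_atTop)
  refine h.abs.of_norm_bounded_eventually_nat ?_
  filter_upwards [hdecay.eventually (eventually_le_nhds one_pos)] with n hn
  have hpow : 0 < ((n : ℝ) + 1) ^ s := by positivity
  calc ‖a n * rexp (-((n : ℝ) + 1) * ρ)‖
      = |a n / ((n : ℝ) + 1) ^ s| * (((n : ℝ) + 1) ^ s * rexp (-ρ * ((n : ℝ) + 1))) := by
        rw [norm_mul, norm_of_nonneg (exp_pos _).le, Real.norm_eq_abs, abs_div, abs_of_pos hpow]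
        field_simp
    _ ≤ |a n / ((n : ℝ) + 1) ^ s| := mul_le_of_le_one_right (abs_nonneg _) hn

lemma summable_mul_log_one_sub {w k : ℕ → ℂ} (hw : Tendsto w atTop (𝓝 0))
    (h : Summable fun n => ‖k n * w n‖) :
    Summable fun n => k n * Complex.log (1 - w n) := by
  refine (h.mul_left (3 / 2)).of_norm_bounded_eventually_nat ?_
  filter_upwards [(tendsto_zero_iff_norm_tendsto_zero.mp hw).eventually
    (eventually_le_nhds one_half_pos)] with n hn
  have hlog := Complex.norm_log_one_add_half_le_self (z := -w n) (by rwa [norm_neg])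
  rw [← sub_eq_add_neg, norm_neg] at hlog
  rw [norm_mul, norm_mul]
  nlinarith [norm_nonneg (k n)]

lemma multipliable_one_sub_zpow_neg {w : ℕ → ℂ} {k : ℕ → ℕ} (hw1 : ∀ n, w n ≠ 1)
    (hw : Tendsto w atTop (𝓝 0)) (h : Summable fun n => (k n : ℝ) * ‖w n‖) :
    Multipliable fun n => (1 - w n) ^ (-(k n : ℤ)) := by
  have hlog : Summable fun n => ((-(k n : ℤ) : ℤ) : ℂ) * Complex.log (1 - w n) :=
    summable_mul_log_one_sub hw (by simpa using h)
  convert hlog.hasSum.cexp.multipliable using 2 with n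
  rw [Function.comp_apply, Complex.exp_int_mul, Complex.exp_log (sub_ne_zero.mpr (hw1 n).symm)]

lemma summable_mul_log_norm_one_sub {w : ℕ → ℂ} {k : ℕ → ℕ} (hw : Tendsto w atTop (𝓝 0))
    (h : Summable fun n => (k n : ℝ) * ‖w n‖) :
    Summable fun n => (k n : ℝ) * log ‖1 - w n‖ := by
  have hlog := summable_mul_log_one_sub (k := fun n => (k n : ℂ)) hw (by simpa using h)
  simpa [Complex.log_re] using Complex.reCLM.summable hlog

lemma tprod_rpow_eq_exp_tsum {ι : Type*} {b e : ι → ℝ} (hb : ∀ i, 0 < b i)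
    (h : Summable fun i => e i * log (b i)) :
    ∏' i, b i ^ e i = rexp (∑' i, e i * log (b i)) := by
  rw [← h.hasSum.rexp.tprod_eq]
  exact tprod_congr fun i => by rw [rpow_def_of_pos (hb i), mul_comm]; rfl

lemma tprod_zpow_eq_exp_tsum {ι : Type*} {b : ι → ℝ} {k : ι → ℤ} (hb : ∀ i, 0 < b i)
    (h : Summable fun i => (k i : ℝ) * log (b i)) :
    ∏' i, b i ^ k i = rexp (∑' i, (k i : ℝ) * log (b i)) := by
  simp_rw [← rpow_intCast]
  exact tprod_rpow_eq_exp_tsum hb h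

lemma summable_mul_log_one_sub_ofReal {q : ℕ → ℝ} {k : ℕ → ℕ} (hq : Tendsto q atTop (𝓝 0))
    (h : Summable fun n => (k n : ℝ) * |q n|) :
    Summable fun n => (k n : ℝ) * log (1 - q n) := by
  have hlog := summable_mul_log_norm_one_sub (w := fun n => (q n : ℂ)) (k := k)
    ((Complex.continuous_ofReal.tendsto' 0 0 Complex.ofReal_zero).comp hq) (by simpa using h)
  simpa [← Complex.ofReal_one, ← Complex.ofReal_sub, Complex.norm_real, log_abs] using hlog

lemma norm_tprod_one_sub_zpow_div_le {w : ℕ → ℂ} {q c : ℕ → ℝ} {k : ℕ → ℕ}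
    (hw1 : ∀ n, w n ≠ 1) (hw : Tendsto w atTop (𝓝 0))
    (hkw : Summable fun n => (k n : ℝ) * ‖w n‖)
    (hq1 : ∀ n, q n < 1) (hq : Tendsto q atTop (𝓝 0))
    (hkq : Summable fun n => (k n : ℝ) * |q n|)
    (hc : ∀ n, 0 < c n) (hkc : Summable fun n => (k n : ℝ) * log (c n))
    (hlog : ∀ n, log (1 - q n) + log (c n) / 2 ≤ log ‖1 - w n‖) :
    ‖∏' n, (1 - w n) ^ (-(k n : ℤ))‖ / ∏' n, (1 - q n) ^ (-(k n : ℤ))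
      ≤ ∏' n, c n ^ (-(k n : ℝ) / 2) := by
  have hX : Summable fun n => ((-(k n : ℤ) : ℤ) : ℝ) * log ‖1 - w n‖ := by
    push_cast; simpa only [neg_mul] using (summable_mul_log_norm_one_sub hw hkw).neg
  have hY : Summable fun n => ((-(k n : ℤ) : ℤ) : ℝ) * log (1 - q n) := by
    push_cast; simpa only [neg_mul] using (summable_mul_log_one_sub_ofReal hq hkq).neg
  have hZ : Summable fun n => (-(k n : ℝ) / 2) * log (c n) := by
    simpa only [neg_div, neg_mul, div_mul_eq_mul_div] using (hkc.div_const 2).neg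
  rw [(multipliable_one_sub_zpow_neg hw1 hw hkw).norm_tprod]
  simp_rw [norm_zpow]
  rw [tprod_zpow_eq_exp_tsum (fun n => norm_pos_iff.mpr (sub_ne_zero.mpr (hw1 n).symm)) hX,
    tprod_zpow_eq_exp_tsum (fun n => sub_pos.mpr (hq1 n)) hY,
    tprod_rpow_eq_exp_tsum hc hZ, ← exp_sub, exp_le_exp, ← hX.tsum_sub hY]
  refine (hX.sub hY).tsum_le_tsum (fun n => ?_) hZ
  have := mul_le_mul_of_nonneg_left (hlog n) (Nat.cast_nonneg (k n))
  push_cast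
  linarith

lemma log_one_add_sq_abs_sub_round_div_le {m ρ : ℝ} (hm : 1 ≤ m) (hρ : 0 < ρ) (θ : ℝ) :
    log (1 + 16 * |θ - round θ| ^ 2 / (rexp (m * ρ) * m ^ 2 * ρ ^ 2))
      ≤ 4 / ρ ^ 2 * rexp (-m * ρ) := by
  have hθ : |θ - round θ| ^ 2 ≤ 1 / 4 := by nlinarith [abs_sub_round θ, abs_nonneg (θ - round θ)]
  calc log (1 + 16 * |θ - round θ| ^ 2 / (rexp (m * ρ) * m ^ 2 * ρ ^ 2))
      ≤ 16 * |θ - round θ| ^ 2 / (rexp (m * ρ) * m ^ 2 * ρ ^ 2) := by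
        linarith [log_le_sub_one_of_pos (by positivity :
          0 < 1 + 16 * |θ - round θ| ^ 2 / (rexp (m * ρ) * m ^ 2 * ρ ^ 2))]
    _ ≤ 16 * (1 / 4) / (rexp (m * ρ) * 1 * ρ ^ 2) := by
        gcongr; exact one_le_pow₀ hm
    _ = 4 / ρ ^ 2 * rexp (-m * ρ) := by rw [neg_mul, exp_neg]; field_simp; ring

theorem stmt12_general (f : ℕ → ℕ)
    (hL : ∃ s : ℝ, Summable fun n : ℕ => (f (n + 1) : ℝ) / ((n + 1 : ℝ)) ^ s)
    (ρ t : ℝ) (hρ : 0 < ρ) :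
    ‖(∏' n : ℕ,
        (1 - Complex.exp (-((n : ℂ) + 1) * ((ρ : ℂ) + 2 * Real.pi * Complex.I * t))) ^
          (-(f (n + 1) : ℤ)))‖ /
      (∏' n : ℕ, (1 - Real.exp (-((n : ℝ) + 1) * ρ)) ^ (-(f (n + 1) : ℤ)))
    ≤ ∏' m : ℕ,
        (1 + 16 * |((m : ℝ) + 1) * t - round (((m : ℝ) + 1) * t)| ^ 2 /
            (Real.exp (((m : ℝ) + 1) * ρ) * ((m : ℝ) + 1) ^ 2 * ρ ^ 2)) ^
          (-(f (m + 1) : ℝ) / 2) := by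
  obtain ⟨s, hs⟩ := hL
  have hmρ : ∀ n : ℕ, 0 < ((n : ℝ) + 1) * ρ := fun n => by positivity
  have hq : Summable fun n : ℕ => (f (n + 1) : ℝ) * rexp (-((n : ℝ) + 1) * ρ) :=
    summable_mul_exp_neg_of_summable_div_rpow hρ hs
  have hq1 : ∀ n : ℕ, rexp (-((n : ℝ) + 1) * ρ) < 1 :=
    fun n => exp_lt_one_iff.mpr (by linarith [hmρ n])
  have hq0 : Tendsto (fun n : ℕ => rexp (-((n : ℝ) + 1) * ρ)) atTop (𝓝 0) :=
    tendsto_exp_atBot.comp ((tendsto_neg_atTop_atBot.comp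
      (tendsto_atTop_add_const_right _ 1 tendsto_natCast_atTop_atTop)).atBot_mul_const hρ)
  have hnorm : ∀ n : ℕ, ‖Complex.exp (-((n : ℂ) + 1) * ((ρ : ℂ) + 2 * π * Complex.I * t))‖
      = rexp (-((n : ℝ) + 1) * ρ) := fun n => by simp [Complex.norm_exp]
  refine norm_tprod_one_sub_zpow_div_le (fun n h => (hq1 n).ne (by rw [← hnorm n, h, norm_one]))
    (tendsto_zero_iff_norm_tendsto_zero.mpr (by simpa only [hnorm] using hq0))
    (by simpa only [hnorm] using hq) hq1 hq0 (by simpa only [abs_of_pos (exp_pos _)] using hq)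
    (fun n => by positivity) ?_ (fun n => ?_)
  · refine (hq.mul_left (4 / ρ ^ 2)).of_nonneg_of_le (fun n => ?_) (fun n => ?_)
    · exact mul_nonneg (Nat.cast_nonneg _) (log_nonneg (le_add_of_nonneg_right (by positivity)))
    · have := log_one_add_sq_abs_sub_round_div_le (m := (n : ℝ) + 1) (by simp) hρ
        (((n : ℝ) + 1) * t)
      rw [mul_left_comm]
      exact mul_le_mul_of_nonneg_left this (Nat.cast_nonneg _)
  · have := log_one_sub_exp_add_half_log_le (hmρ n) t
    push_cast at this
    exact this

theorem stmt12 (f : ℕ → ℕ) (α ω : ℝ) (hα : 0 < α)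
    (hL : ∃ s : ℝ, Summable fun n : ℕ => (f (n + 1) : ℝ) / ((n + 1 : ℝ)) ^ s)
    (hω : Tendsto (fun x : ℝ => (∑ m ∈ Finset.Icc 1 ⌊x⌋₊, (f m : ℝ)) / x ^ α)
      atTop (𝓝 (ω / α)))
    (ρ t : ℝ) (hρ : 0 < ρ) :
    ‖(∏' n : ℕ,
        (1 - Complex.exp (-((n : ℂ) + 1) * ((ρ : ℂ) + 2 * Real.pi * Complex.I * t))) ^
          (-(f (n + 1) : ℤ)))‖ /
      (∏' n : ℕ, (1 - Real.exp (-((n : ℝ) + 1) * ρ)) ^ (-(f (n + 1) : ℤ)))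
    ≤ ∏' m : ℕ,
        (1 + 16 * |((m : ℝ) + 1) * t - round (((m : ℝ) + 1) * t)| ^ 2 /
            (Real.exp (((m : ℝ) + 1) * ρ) * ((m : ℝ) + 1) ^ 2 * ρ ^ 2)) ^
          (-(f (m + 1) : ℝ) / 2) :=
  stmt12_general f hL ρ t hρ
end

section
/- Let f : ℕ → ℕ₀ be defined by f(n) = #{(j,k) ∈ ℕ² : jk(j+k)(j+2k)/6 = n} and let Λ = {n ∈ ℕ : f(n) ≥ 1} be the set of dimensions of irreducible representations of so(5). Then for every prime p, the set Λ \ (Λ ∩ pℕ) is infinite; i.e., infinitely many integers of the form jk(j+k)(j+2k)/6 are not divisible by p. -/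
theorem stmt15 (p : ℕ) (hp : p.Prime) :
    {N : ℕ | (∃ j k : ℕ, 1 ≤ j ∧ 1 ≤ k ∧
        6 * N = j * k * (j + k) * (j + 2 * k)) ∧ ¬ p ∣ N}.Infinite := by
  have hp2 := hp.two_le
  apply Set.infinite_of_injective_forall_mem
    (f := fun m : ℕ => (6*p*m+1)*(3*p*m+1)*(2*p*m+1))
  case hi =>
    have hsm : StrictMono fun m : ℕ => (6*p*m+1)*(3*p*m+1)*(2*p*m+1) := by
      intro a b hab
      simp only
      have hp0 : 0 < p := by omega
      gcongr
    exact hsm.injective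
  case hf =>
    intro m
    refine ⟨⟨6*p*m+1, 1, by omega, le_refl 1, by ring⟩, ?_⟩
    intro h
    haveI : Fact p.Prime := ⟨hp⟩
    have h1 : ((((6*p*m+1)*(3*p*m+1)*(2*p*m+1)) : ℕ) : ZMod p) = 1 := by
      push_cast
      simp [ZMod.natCast_self]
    have h0 : ((((6*p*m+1)*(3*p*m+1)*(2*p*m+1)) : ℕ) : ZMod p) = 0 :=
      (ZMod.natCast_eq_zero_iff _ _).mpr h
    rw [h1] at h0
    exact one_ne_zero h0
end

section
/- Suppose g(x) = ∑_{j=1}^{N} a_j x^{−ν_j} + O(x^{−R}) as x → ∞ with ν₁ = 0 and exponents 0 = ν₁ < ν₂ < ⋯ < ν_N < R, and let h be a function holomorphic in a neighborhood of a₁. Then h(g(x)) is defined for all sufficiently large x and admits an asymptotic expansion h(g(x)) = ∑_{j} c_j x^{−μ_j} + O(x^{−R}) as x → ∞, where the exponents μ_j run through (∑_{j=1}^{N} ν_j ℕ₀) ∩ [0, R). -/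
open Filter Topology Asymptotics Finset

/-!
Write `g = a₀ + s + e` with `s x = ∑_{j ≥ 2} a_j x^{-ν_j}` and `e = O(x^{-R})`. Since the `ν_j`,
`j ≥ 2`, are positive, `u = g - a₀ = O(x^{-δ})` for some `δ > 0`, so Taylor's formula for `h` at
`a₀` of order `K ≥ R / δ` gives `h ∘ g = ∑_{k < K} c_k u^k + O(x^{-R})`. Replacing `u` by `s`
costs `O(x^{-R})` because `u` and `s` are bounded, and `∑_{k < K} c_k s^k` is the evaluation of a
polynomial in the variables `X_j = x^{-ν_j}`: each monomial `X^m` contributes `x^{-∑ m_j ν_j}`,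
and the monomials with exponent at least `R` are themselves `O(x^{-R})`.
-/

lemma rpow_neg_isBigO_rpow_neg {p q : ℝ} (h : p ≤ q) :
    (fun x : ℝ => x ^ (-q)) =O[atTop] fun x : ℝ => x ^ (-p) := by
  refine IsBigO.of_bound 1 ?_
  filter_upwards [eventually_ge_atTop 1] with x hx
  have hx0 : 0 ≤ x := zero_le_one.trans hx
  rw [one_mul, Real.norm_of_nonneg (Real.rpow_nonneg hx0 _),
    Real.norm_of_nonneg (Real.rpow_nonneg hx0 _)]
  exact Real.rpow_le_rpow_of_exponent_le hx (neg_le_neg h)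

lemma isBigO_norm_pow_rpow_neg {E : Type*} [SeminormedAddCommGroup E] {u : ℝ → E} {ε R : ℝ}
    {K : ℕ} (hu : u =O[atTop] fun x => x ^ (-ε)) (hK : R ≤ K * ε) :
    (fun x => ‖u x‖ ^ K) =O[atTop] fun x => x ^ (-R) := by
  refine (hu.norm_left.pow K).trans (IsBigO.trans ?_ (rpow_neg_isBigO_rpow_neg hK))
  refine EventuallyEq.isBigO ?_
  filter_upwards [eventually_ge_atTop 0] with x hx
  rw [← Real.rpow_natCast, ← Real.rpow_mul hx]
  ring_nf

lemma isBigO_sum_mul_rpow_neg {ι : Type*} {t : Finset ι} {c : ι → ℂ} {μ : ι → ℝ} {ε : ℝ}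
    (h : ∀ i ∈ t, ε ≤ μ i) :
    (fun x : ℝ => ∑ i ∈ t, c i * ((x ^ (-μ i) : ℝ) : ℂ)) =O[atTop] fun x => x ^ (-ε) :=
  IsBigO.fun_sum fun i hi =>
    (Complex.isBigO_ofReal_left.2 (rpow_neg_isBigO_rpow_neg (h i hi))).const_mul_left _

lemma isBigO_sum_mul_rpow_neg_sub_sum_filter {ι : Type*} (t : Finset ι) (c : ι → ℂ)
    (μ : ι → ℝ) (R : ℝ) :
    (fun x : ℝ => ∑ i ∈ t, c i * ((x ^ (-μ i) : ℝ) : ℂ)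
      - ∑ i ∈ t with μ i < R, c i * ((x ^ (-μ i) : ℝ) : ℂ)) =O[atTop] fun x => x ^ (-R) := by
  simp_rw [← sum_filter_add_sum_filter_not t (fun i => μ i < R), add_sub_cancel_left]
  exact isBigO_sum_mul_rpow_neg fun i hi => not_lt.1 (mem_filter.1 hi).2

lemma Finset.exists_pos_forall_le {ι : Type*} {t : Finset ι} {μ : ι → ℝ}
    (h : ∀ i ∈ t, 0 < μ i) : ∃ ε > 0, ∀ i ∈ t, ε ≤ μ i := by
  have : ∀ᶠ ε in 𝓝[>] 0, (∀ i ∈ t, ε ≤ μ i) ∧ 0 < ε :=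
    ((eventually_all_finset t).2 fun i hi =>
      eventually_nhdsWithin_of_eventually_nhds (eventually_le_nhds (h i hi))).and
      self_mem_nhdsWithin
  obtain ⟨ε, hle, hpos⟩ := this.exists
  exact ⟨ε, hpos, hle⟩

lemma Asymptotics.IsBigO.pow_sub_pow {α 𝕜 : Type*} [NormedCommRing 𝕜] {l : Filter α}
    {u v : α → 𝕜} {φ : α → ℝ} (hu : u =O[l] (fun _ => (1 : ℝ)))
    (hv : v =O[l] (fun _ => (1 : ℝ))) (h : (fun x => u x - v x) =O[l] φ) (n : ℕ) :
    (fun x => u x ^ n - v x ^ n) =O[l] φ := by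
  simp_rw [← geom_sum₂_mul]
  have : (fun x => ∑ i ∈ range n, u x ^ i * v x ^ (n - 1 - i)) =O[l] fun _ => (1 : ℝ) :=
    IsBigO.fun_sum fun i _ => by simpa using (hu.pow i).mul (hv.pow (n - 1 - i))
  simpa using this.mul h

lemma isBigO_sum_mul_pow_sub_sum_mul_pow {α 𝕜 : Type*} [NormedCommRing 𝕜] {l : Filter α}
    {u v : α → 𝕜} {φ : α → ℝ} (hu : u =O[l] (fun _ => (1 : ℝ)))
    (hv : v =O[l] (fun _ => (1 : ℝ))) (h : (fun x => u x - v x) =O[l] φ) (c : ℕ → 𝕜) (K : ℕ) :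
    (fun x => ∑ k ∈ range K, c k * u x ^ k - ∑ k ∈ range K, c k * v x ^ k) =O[l] φ := by
  simp_rw [← sum_sub_distrib, ← mul_sub]
  exact IsBigO.fun_sum fun k _ => (hu.pow_sub_pow hv h k).const_mul_left _

lemma HasFPowerSeriesAt.isBigO_comp_sub_sum_coeff_mul_pow {𝕜 α : Type*}
    [NontriviallyNormedField 𝕜] {f : 𝕜 → 𝕜} {p : FormalMultilinearSeries 𝕜 𝕜 𝕜} {z₀ : 𝕜}
    (hf : HasFPowerSeriesAt f p z₀) {l : Filter α} {u : α → 𝕜} (hu : Tendsto u l (𝓝 z₀))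
    (K : ℕ) :
    (fun x => f (u x) - ∑ k ∈ range K, p.coeff k * (u x - z₀) ^ k) =O[l]
      fun x => ‖u x - z₀‖ ^ K := by
  have hu0 : Tendsto (fun x => u x - z₀) l (𝓝 0) := by
    simpa using hu.sub_const z₀
  simpa [Function.comp_def, FormalMultilinearSeries.partialSum, mul_comm] using
    (hf.isBigO_sub_partialSum_pow K).comp_tendsto hu0

lemma MvPolynomial.eval_ofReal_rpow_neg {σ : Type*} [Fintype σ] (ν : σ → ℝ)
    (P : MvPolynomial σ ℂ) {x : ℝ} (hx : 0 < x) :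
    eval (fun j => ((x ^ (-ν j) : ℝ) : ℂ)) P
      = ∑ m ∈ P.support, P.coeff m * ((x ^ (-∑ j, (m j : ℝ) * ν j) : ℝ) : ℂ) := by
  rw [eval_eq']
  refine sum_congr rfl fun m _ => congrArg (P.coeff m * ·) ?_
  rw [← sum_neg_distrib, Real.rpow_sum_of_pos hx, Complex.ofReal_prod]
  refine prod_congr rfl fun j _ => ?_
  rw [← Complex.ofReal_pow, ← Real.rpow_natCast, ← Real.rpow_mul hx.le]
  ring_nf

theorem MvPolynomial.exists_expansion_of_isBigO_sub_eval {σ : Type*} [Fintype σ] {ν : σ → ℝ}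
    (hν : ∀ j, 0 ≤ ν j) (P : MvPolynomial σ ℂ) {f : ℝ → ℂ} {R : ℝ}
    (hf : (fun x => f x - eval (fun j => ((x ^ (-ν j) : ℝ) : ℂ)) P) =O[atTop]
      fun x => x ^ (-R)) :
    ∃ (M : ℕ) (c : Fin M → ℂ) (μ : Fin M → ℝ),
      (∀ i, (∃ m : σ → ℕ, μ i = ∑ j, (m j : ℝ) * ν j) ∧ 0 ≤ μ i ∧ μ i < R) ∧
      (fun x : ℝ => f x - ∑ i, c i * ((x ^ (-(μ i)) : ℝ) : ℂ)) =O[atTop]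
        fun x : ℝ => x ^ (-R) := by
  classical
  set μ : (σ →₀ ℕ) → ℝ := fun m => ∑ j, (m j : ℝ) * ν j
  set t := P.support.filter (μ · < R)
  set e := t.equivFin.symm
  refine ⟨t.card, fun i => P.coeff (e i), fun i => μ (e i),
    fun i => ⟨⟨e i, rfl⟩, sum_nonneg fun j _ => mul_nonneg (Nat.cast_nonneg _) (hν j),
      (mem_filter.1 (e i).2).2⟩, ?_⟩
  have hsum (x : ℝ) : ∑ i, P.coeff (e i) * ((x ^ (-μ (e i)) : ℝ) : ℂ)
      = ∑ m ∈ t, P.coeff m * ((x ^ (-μ m) : ℝ) : ℂ) :=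
    (e.sum_comp fun m : t => P.coeff m * ((x ^ (-μ m) : ℝ) : ℂ)).trans
      (sum_coe_sort t fun m => P.coeff m * ((x ^ (-μ m) : ℝ) : ℂ))
  simp_rw [hsum]
  refine (hf.add (isBigO_sum_mul_rpow_neg_sub_sum_filter P.support P.coeff μ R)).congr'
    ?_ EventuallyEq.rfl
  filter_upwards [eventually_gt_atTop 0] with x hx
  rw [eval_ofReal_rpow_neg ν P hx, sub_add_sub_cancel]

theorem stmt19_general (R : ℝ) (hR : 0 < R) (N : ℕ) (hN : 0 < N)
    (a : Fin N → ℂ) (ν : Fin N → ℝ) (hmono : StrictMono ν)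
    (hν0 : ν ⟨0, hN⟩ = 0)
    (g : ℝ → ℂ)
    (hg : (fun x : ℝ => g x - ∑ j, a j * ((x ^ (-(ν j)) : ℝ) : ℂ)) =O[atTop]
      fun x : ℝ => x ^ (-R))
    (h : ℂ → ℂ) (hh : AnalyticAt ℂ h (a ⟨0, hN⟩)) :
    ∃ (M : ℕ) (c : Fin M → ℂ) (μ : Fin M → ℝ),
      (∀ i, (∃ m : Fin N → ℕ, μ i = ∑ j, (m j : ℝ) * ν j) ∧ 0 ≤ μ i ∧ μ i < R) ∧
      (fun x : ℝ => h (g x) - ∑ i, c i * ((x ^ (-(μ i)) : ℝ) : ℂ)) =O[atTop]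
        fun x : ℝ => x ^ (-R) := by
  classical
  set i₀ : Fin N := ⟨0, hN⟩
  obtain ⟨p, hp⟩ := hh
  have hν_nonneg (j : Fin N) : 0 ≤ ν j := hν0 ▸ hmono.monotone (Nat.zero_le j.val)
  have hν_pos : ∀ j ∈ univ.erase i₀, 0 < ν j := fun j hj =>
    hν0 ▸ hmono ((Nat.zero_le j.val).lt_of_ne' (Fin.val_ne_of_ne (ne_of_mem_erase hj)))
  set s : ℝ → ℂ := fun x => ∑ j ∈ univ.erase i₀, a j * ((x ^ (-ν j) : ℝ) : ℂ)
  have he : (fun x => (g x - a i₀) - s x) =O[atTop] fun x => x ^ (-R) :=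
    hg.congr_left fun x => by
      rw [← add_sum_erase _ _ (mem_univ i₀), hν0]
      simp only [neg_zero, Real.rpow_zero, Complex.ofReal_one, mul_one, s]
      ring
  obtain ⟨ε, hε, hεν⟩ := exists_pos_forall_le hν_pos
  set δ := min ε R
  have hδ : 0 < δ := lt_min hε hR
  have hs : s =O[atTop] fun x => x ^ (-δ) :=
    isBigO_sum_mul_rpow_neg fun j hj => (min_le_left _ _).trans (hεν j hj)
  have hu : (fun x => g x - a i₀) =O[atTop] fun x => x ^ (-δ) :=
    ((he.trans (rpow_neg_isBigO_rpow_neg (min_le_right _ _))).add hs).congr_left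
      fun x => sub_add_cancel _ _
  have hδ0 := tendsto_rpow_neg_atTop hδ
  obtain ⟨K, hK⟩ : ∃ K : ℕ, R ≤ K * δ := ⟨⌈R / δ⌉₊, (div_le_iff₀ hδ).1 (Nat.le_ceil _)⟩
  have htaylor := (hp.isBigO_comp_sub_sum_coeff_mul_pow
    (tendsto_sub_nhds_zero_iff.1 (hu.trans_tendsto hδ0)) K).trans
    (isBigO_norm_pow_rpow_neg hu hK)
  have hpoly := isBigO_sum_mul_pow_sub_sum_mul_pow ((hu.trans_tendsto hδ0).isBigO_one ℝ)
    ((hs.trans_tendsto hδ0).isBigO_one ℝ) he p.coeff K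
  set L : MvPolynomial (Fin N) ℂ := ∑ j ∈ univ.erase i₀, .C (a j) * .X j
  refine MvPolynomial.exists_expansion_of_isBigO_sub_eval hν_nonneg
    (∑ k ∈ range K, .C (p.coeff k) * L ^ k) ((htaylor.add hpoly).congr_left fun x => ?_)
  simp [L, s]

theorem stmt19 (R : ℝ) (hR : 0 < R) (N : ℕ) (hN : 0 < N)
    (a : Fin N → ℂ) (ν : Fin N → ℝ) (hmono : StrictMono ν)
    (hν0 : ν ⟨0, hN⟩ = 0) (hνR : ∀ j, ν j < R)
    (g : ℝ → ℂ)
    (hg : (fun x : ℝ => g x - ∑ j, a j * ((x ^ (-(ν j)) : ℝ) : ℂ)) =O[atTop]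
      fun x : ℝ => x ^ (-R))
    (h : ℂ → ℂ) (hh : AnalyticAt ℂ h (a ⟨0, hN⟩)) :
    ∃ (M : ℕ) (c : Fin M → ℂ) (μ : Fin M → ℝ),
      (∀ i, (∃ m : Fin N → ℕ, μ i = ∑ j, (m j : ℝ) * ν j) ∧ 0 ≤ μ i ∧ μ i < R) ∧
      (fun x : ℝ => h (g x) - ∑ i, c i * ((x ^ (-(μ i)) : ℝ) : ℂ)) =O[atTop]
        fun x : ℝ => x ^ (-R) :=
  stmt19_general R hR N hN a ν hmono hν0 g hg h hh
end
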